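/- Let C ≥ 1 and fix a point v ∈ ℝ^d with ‖v‖ ≤ C. Let x be a random vector in ℝ^d distributed as (1/√d)·N(0, I_d), i.e. with i.i.d. N(0, 1/d) coordinates. If d ≤ (log n)/(10·C²) and n is sufficiently large, then Pr(‖x − v‖ ≤ 1/C) ≥ n^{−1/10}. -/

import Mathlib

/-!
The ball of radius `1/C` around `v` contains the cube `∏ᵢ [vᵢ - a, vᵢ + a]` with
`a = 1/(C√d)`, whose Gaussian measure factorizes over coordinates. Each factor is at least
`exp (-d vᵢ² / 2) · K` with `K = (2/C - 1/(3C³))/√(2π) ≥ exp (-C²/2)`: the first factor pays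
for moving the interval from `0` to `vᵢ`, and `K` bounds the centred mass via
`exp (-x) ≥ 1 - x`. Hence the probability is at least
`exp (-d ‖v‖²/2) K^d ≥ exp (-C² d) ≥ n^{-1/10}`.
-/

open MeasureTheory ProbabilityTheory
open scoped ENNReal NNReal Classical

noncomputable section

/-- The distribution `(1/√d)·N(0, I_d)`: a vector with i.i.d. `N(0, 1/d)` coordinates. -/
def stdScaledGauss (d : ℕ) : Measure (Fin d → ℝ) :=
  Measure.pi fun _ => gaussianReal 0 ((d : ℝ≥0))⁻¹

/-- View a coordinate vector as a point of Euclidean space (with the `ℓ²` norm). -/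
def toEuc {d : ℕ} (x : Fin d → ℝ) : EuclideanSpace ℝ (Fin d) := WithLp.toLp 2 x

open Real Set

@[fun_prop]
lemma continuous_gaussianPDFReal (μ : ℝ) (v : ℝ≥0) : Continuous (gaussianPDFReal μ v) := by
  unfold gaussianPDFReal
  fun_prop

lemma exp_mul_gaussianPDFReal_le (v : ℝ≥0) (m s : ℝ) :
    exp (-m ^ 2 / (2 * v)) * gaussianPDFReal 0 v s
      ≤ (gaussianPDFReal 0 v (m + s) + gaussianPDFReal 0 v (m - s)) / 2 := by
  simp only [gaussianPDFReal, sub_zero]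
  rw [mul_left_comm, ← mul_add, mul_div_assoc]
  gcongr
  have hconv := convexOn_exp.2 (mem_univ (-(m + s) ^ 2 / (2 * v)))
    (mem_univ (-(m - s) ^ 2 / (2 * v))) (by norm_num : (0 : ℝ) ≤ 1 / 2)
    (by norm_num : (0 : ℝ) ≤ 1 / 2) (by norm_num)
  simp only [smul_eq_mul] at hconv
  rw [← exp_add]
  convert hconv using 2 <;> ring

/-- The shifted mass is the average of `∫ pdf (m + s)` and `∫ pdf (m - s)` over `[-a, a]`. -/
lemma gaussianReal_Icc_shift_ge {v : ℝ≥0} (hv : v ≠ 0) (m : ℝ) {a : ℝ} (ha : 0 ≤ a) :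
    ENNReal.ofReal (exp (-m ^ 2 / (2 * v))) * gaussianReal 0 v (Icc (-a) a)
      ≤ gaussianReal 0 v (Icc (m - a) (m + a)) := by
  simp only [gaussianReal_apply_eq_integral _ hv, integral_Icc_eq_integral_Ioc,
    ← intervalIntegral.integral_of_le (by linarith : -a ≤ a),
    ← intervalIntegral.integral_of_le (by linarith : m - a ≤ m + a)]
  rw [← ENNReal.ofReal_mul (exp_pos _).le, ← intervalIntegral.integral_const_mul]
  apply ENNReal.ofReal_le_ofReal
  have h_add : ∫ x in m - a..m + a, gaussianPDFReal 0 v x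
      = ∫ s in -a..a, gaussianPDFReal 0 v (m + s) := by
    rw [intervalIntegral.integral_comp_add_left]; ring_nf
  have h_sub : ∫ x in m - a..m + a, gaussianPDFReal 0 v x
      = ∫ s in -a..a, gaussianPDFReal 0 v (m - s) := by
    rw [intervalIntegral.integral_comp_sub_left]; ring_nf
  calc ∫ s in -a..a, exp (-m ^ 2 / (2 * v)) * gaussianPDFReal 0 v s
      ≤ ∫ s in -a..a, (gaussianPDFReal 0 v (m + s) + gaussianPDFReal 0 v (m - s)) / 2 :=
        intervalIntegral.integral_mono_on (by linarith)
          (Continuous.intervalIntegrable (by fun_prop) _ _)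
          (Continuous.intervalIntegrable (by fun_prop) _ _)
          fun s _ => exp_mul_gaussianPDFReal_le v m s
    _ = ∫ x in m - a..m + a, gaussianPDFReal 0 v x := by
        rw [intervalIntegral.integral_div, intervalIntegral.integral_add
          (Continuous.intervalIntegrable (by fun_prop) _ _)
          (Continuous.intervalIntegrable (by fun_prop) _ _), ← h_add, ← h_sub]
        ring

lemma gaussianReal_Icc_neg_self_ge {v : ℝ≥0} (hv : v ≠ 0) {t : ℝ} (ht : 0 ≤ t) :
    ENNReal.ofReal ((2 * t - t ^ 3 / 3) / √(2 * π))
      ≤ gaussianReal 0 v (Icc (-(t * √v)) (t * √v)) := by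
  have hv0 : (0 : ℝ) < v := by positivity
  have ha : 0 ≤ t * √v := by positivity
  rw [gaussianReal_apply_eq_integral _ hv, integral_Icc_eq_integral_Ioc,
    ← intervalIntegral.integral_of_le (by linarith)]
  apply ENNReal.ofReal_le_ofReal
  calc (2 * t - t ^ 3 / 3) / √(2 * π)
      = ∫ x in -(t * √v)..t * √v, (√(2 * π * v))⁻¹ * (1 - x ^ 2 / (2 * v)) := by
        rw [intervalIntegral.integral_const_mul,
          intervalIntegral.integral_sub intervalIntegrable_const
            (Continuous.intervalIntegrable (by fun_prop) _ _), intervalIntegral.integral_div,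
          integral_pow, sqrt_mul (by positivity : (0 : ℝ) ≤ 2 * π) v]
        simp only [intervalIntegral.integral_const, smul_eq_mul]
        field_simp
        have hcube : √(v : ℝ) ^ 3 = v * √v := by rw [pow_succ, sq_sqrt hv0.le]
        ring_nf
        rw [hcube]
        ring
    _ ≤ ∫ x in -(t * √v)..t * √v, gaussianPDFReal 0 v x := by
        refine intervalIntegral.integral_mono_on (by linarith)
          (Continuous.intervalIntegrable (by fun_prop) _ _)
          (Continuous.intervalIntegrable (by fun_prop) _ _) fun x _ => ?_
        simp only [gaussianPDFReal, sub_zero]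
        gcongr
        linarith [add_one_le_exp (-x ^ 2 / (2 * v)), neg_div (2 * (v : ℝ)) (x ^ 2)]

lemma pi_Icc_subset_norm_sub_le {d : ℕ} (v : EuclideanSpace ℝ (Fin d)) {r : ℝ} (hr : 0 ≤ r) :
    univ.pi (fun i => Icc (v i - r) (v i + r)) ⊆ {x | ‖toEuc x - v‖ ≤ √d * r} := by
  intro x hx
  have hsum : ∑ i, ‖(toEuc x - v) i‖ ^ 2 ≤ d * r ^ 2 := by
    calc ∑ i, ‖(toEuc x - v) i‖ ^ 2 ≤ ∑ _i : Fin d, r ^ 2 := by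
          refine Finset.sum_le_sum fun i _ => ?_
          obtain ⟨hlo, hhi⟩ := hx i (mem_univ i)
          simp only [toEuc, PiLp.sub_apply, Real.norm_eq_abs, sq_abs]
          exact sq_le_sq' (by linarith) (by linarith)
      _ = d * r ^ 2 := by simp
  calc ‖toEuc x - v‖ = √(∑ i, ‖(toEuc x - v) i‖ ^ 2) := EuclideanSpace.norm_eq _
    _ ≤ √(d * r ^ 2) := sqrt_le_sqrt hsum
    _ = √d * r := by rw [sqrt_mul (Nat.cast_nonneg d), sqrt_sq hr]

lemma stdScaledGauss_pi_Icc_ge {d : ℕ} (hd : 0 < d) (v : EuclideanSpace ℝ (Fin d)) {t : ℝ}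
    (ht : 0 ≤ t) :
    ENNReal.ofReal (exp (-(d * ‖v‖ ^ 2) / 2))
        * ENNReal.ofReal ((2 * t - t ^ 3 / 3) / √(2 * π)) ^ d
      ≤ stdScaledGauss d (univ.pi fun i => Icc (v i - t / √d) (v i + t / √d)) := by
  set K := (2 * t - t ^ 3 / 3) / √(2 * π)
  have hvar : ((d : ℝ≥0)⁻¹ : ℝ≥0) ≠ 0 := by simp [hd.ne']
  have hsqrt : t * √(((d : ℝ≥0)⁻¹ : ℝ≥0) : ℝ) = t / √d := by
    rw [NNReal.coe_inv, NNReal.coe_natCast, sqrt_inv, div_eq_mul_inv]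
  have hcoord : ∀ i, ENNReal.ofReal (exp (-(d * v i ^ 2) / 2)) * ENNReal.ofReal K
      ≤ gaussianReal 0 (d : ℝ≥0)⁻¹ (Icc (v i - t / √d) (v i + t / √d)) := by
    intro i
    have hshift := gaussianReal_Icc_shift_ge hvar (v i) (a := t / √d) (by positivity)
    have hcenter := gaussianReal_Icc_neg_self_ge hvar ht
    rw [hsqrt] at hcenter
    have hexp : -(d * v i ^ 2) / 2 = -v i ^ 2 / (2 * ((d : ℝ≥0)⁻¹ : ℝ≥0)) := by
      rw [NNReal.coe_inv, NNReal.coe_natCast]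
      field_simp
    rw [hexp]
    exact (mul_le_mul' le_rfl hcenter).trans hshift
  rw [stdScaledGauss, Measure.pi_pi]
  calc ENNReal.ofReal (exp (-(d * ‖v‖ ^ 2) / 2)) * ENNReal.ofReal K ^ d
      = ∏ i, ENNReal.ofReal (exp (-(d * v i ^ 2) / 2)) * ENNReal.ofReal K := by
        rw [Finset.prod_mul_distrib, Finset.prod_const, Finset.card_univ, Fintype.card_fin,
          ← ENNReal.ofReal_prod_of_nonneg (fun i _ => (exp_pos _).le), ← exp_sum,
          EuclideanSpace.real_norm_sq_eq, Finset.mul_sum, ← Finset.sum_neg_distrib, Finset.sum_div]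
    _ ≤ _ := Finset.prod_le_prod' fun i _ => hcoord i

lemma exp_neg_sq_div_two_le {C : ℝ} (hC : 1 ≤ C) :
    exp (-C ^ 2 / 2) ≤ (2 * (1 / C) - (1 / C) ^ 3 / 3) / √(2 * π) := by
  have hC0 : 0 < C := by linarith
  have hdecay : C * exp (-C ^ 2 / 2) ≤ exp (-1 / 2) := by
    calc C * exp (-C ^ 2 / 2) ≤ exp ((C ^ 2 - 1) / 2) * exp (-C ^ 2 / 2) := by
          gcongr; nlinarith [add_one_le_exp ((C ^ 2 - 1) / 2)]
      _ = exp (-1 / 2) := by rw [← exp_add]; ring_nf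
  have hconst : exp (-1 / 2) * √(2 * π) ≤ 5 / 3 := by
    rw [← pow_le_pow_iff_left₀ (by positivity) (by norm_num) two_ne_zero, mul_pow,
      sq_sqrt (by positivity), ← exp_nat_mul]
    have hexp : exp (-1) * exp 1 = 1 := by rw [← exp_add]; norm_num
    nlinarith [pi_lt_d2, exp_one_gt_d9, exp_pos (-1)]
  have hC2 : 1 / (3 * C ^ 2) ≤ 1 / 3 := by gcongr; nlinarith
  have key : C * (exp (-C ^ 2 / 2) * √(2 * π)) ≤ 2 - 1 / (3 * C ^ 2) := by
    have := mul_le_mul_of_nonneg_right hdecay (sqrt_nonneg (2 * π))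
    linarith
  rw [le_div_iff₀ (by positivity)]
  calc exp (-C ^ 2 / 2) * √(2 * π) = C * (exp (-C ^ 2 / 2) * √(2 * π)) / C := by field_simp
    _ ≤ (2 - 1 / (3 * C ^ 2)) / C := by gcongr
    _ = 2 * (1 / C) - (1 / C) ^ 3 / 3 := by field_simp

/-- Lemma: a scaled Gaussian vector lands within distance `1/C` of a
fixed point `v` of norm at most `C` with probability at least `n^{-1/10}`, provided
`d ≤ log n/(10 C²)` and `n` is sufficiently large. -/
theorem gaussian_near_fixed_point (C : ℝ) (hC : 1 ≤ C) :
    ∃ N : ℕ, ∀ n : ℕ, N ≤ n → ∀ d : ℕ, 0 < d →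
      (d : ℝ) ≤ Real.log n / (10 * C ^ 2) →
      ∀ v : EuclideanSpace ℝ (Fin d), ‖v‖ ≤ C →
        ENNReal.ofReal ((n : ℝ) ^ (-(1 : ℝ) / 10))
          ≤ stdScaledGauss d {x | ‖toEuc x - v‖ ≤ 1 / C} := by
  refine ⟨1, fun n hn d hd hdlog v hv => ?_⟩
  have hC0 : 0 < C := by linarith
  have hK := exp_neg_sq_div_two_le hC
  have hball : univ.pi (fun i => Icc (v i - 1 / C / √d) (v i + 1 / C / √d))
      ⊆ {x | ‖toEuc x - v‖ ≤ 1 / C} := by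
    simpa [mul_div_cancel₀ _ (sqrt_pos.2 (Nat.cast_pos.2 hd)).ne'] using
      pi_Icc_subset_norm_sub_le v (r := 1 / C / √d) (by positivity)
  refine le_trans ?_ ((stdScaledGauss_pi_Icc_ge hd v (t := 1 / C) (by positivity)).trans
    (measure_mono hball))
  rw [← ENNReal.ofReal_pow ((exp_pos _).le.trans hK), ← ENNReal.ofReal_mul (exp_pos _).le]
  apply ENNReal.ofReal_le_ofReal
  have hlog : C ^ 2 * d ≤ log n / 10 := by
    rw [le_div_iff₀ (by positivity)] at hdlog; linarith
  calc (n : ℝ) ^ (-(1 : ℝ) / 10) = exp (-(log n / 10)) := by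
        rw [rpow_def_of_pos (by exact_mod_cast hn)]; ring_nf
    _ ≤ exp (-(d * C ^ 2) / 2) * exp (-C ^ 2 / 2) ^ d := by
        rw [← exp_nat_mul, ← exp_add]; gcongr; linarith
    _ ≤ exp (-(d * ‖v‖ ^ 2) / 2) * ((2 * (1 / C) - (1 / C) ^ 3 / 3) / √(2 * π)) ^ d := by
        gcongr
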